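/- Matrix elements of the discrete Fourier transform in the Weyl-symmetrized bases: for all α, β ∈ 𝒵, (i) ⟨F_𝒵 e_β, e_α⟩_𝒵 = |𝒵|^{−1/2} Σ_{w∈W} e^{2πi⟨w(α),β⟩}; (ii) ⟨F_𝒵 ẽ_β, ẽ_α⟩_𝒵 = |𝒵|^{−1/2} Σ_{w∈W} det(w) e^{2πi⟨w(α),β⟩}; and, provided W contains an element of determinant −1, (iii) ⟨F_𝒵 e_β, ẽ_α⟩_𝒵 = 0 and, when Λ is in addition even, ⟨G_𝒵⁻¹ e_β, ẽ_α⟩_𝒵 = 0. -/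

import Mathlib

open MeasureTheory Complex
open scoped Real RealInnerProductSpace BigOperators

noncomputable section

/-- `ℝⁿ` as a Euclidean space. -/
abbrev EN (n : ℕ) := EuclideanSpace ℝ (Fin n)

open Classical

/-- The Kronecker delta `δ_γ ∈ ℂ^𝒵`, as the indicator of the `Λ`-coset of `γ`. -/
def deltaFn {n : ℕ} (Λ : AddSubgroup (EN n)) (γ : EN n) : EN n → ℂ :=
  fun γ₀ => if γ₀ - γ ∈ Λ then 1 else 0

/-- The Weyl-symmetrized basis vector `e_α = |W|^{-1/2} Σ_{w∈W} δ_{w(α)}`. -/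
def eInv {n : ℕ} (Λ : AddSubgroup (EN n)) (W : Finset (EN n ≃ₗᵢ[ℝ] EN n))
    (α : EN n) : EN n → ℂ :=
  fun γ₀ => (Real.sqrt W.card)⁻¹ * ∑ w ∈ W, deltaFn Λ (w α) γ₀

/-- The Weyl-anti-symmetrized basis vector
`ẽ_α = |W|^{-1/2} Σ_{w∈W} det(w) δ_{w(α)}`. -/
def eAnti {n : ℕ} (Λ : AddSubgroup (EN n)) (W : Finset (EN n ≃ₗᵢ[ℝ] EN n))
    (α : EN n) : EN n → ℂ :=
  fun γ₀ => (Real.sqrt W.card)⁻¹ *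
    ∑ w ∈ W, ((LinearMap.det w.toLinearEquiv.toLinearMap : ℝ) : ℂ) * deltaFn Λ (w α) γ₀

/-- The inner product `⟨x,y⟩_𝒵 = Σ_{γ∈𝒵} x(γ) conj (y(γ))` on `ℂ^𝒵`, with `R` a
set of coset representatives for `𝒵 = Λ*/Λ`. -/
def innZ {n : ℕ} (R : Finset (EN n)) (x y : EN n → ℂ) : ℂ :=
  ∑ γ ∈ R, x γ * (starRingEnd ℂ) (y γ)

/-- The discrete Fourier transform `F_𝒵(x)(γ) = |𝒵|^{-1/2} Σ_{γ̂∈𝒵} x(γ̂) e^{2πi⟨γ,γ̂⟩}`. -/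
def DFT0 {n : ℕ} (R : Finset (EN n)) (x : EN n → ℂ) : EN n → ℂ :=
  fun γ => (Real.sqrt R.card)⁻¹ *
    ∑ γh ∈ R, x γh * Complex.exp (2 * (π : ℂ) * I * (⟪γ, γh⟫ : ℂ))

/-- The inverse Gaussian operator `G_𝒵⁻¹(x)(γ) = e^{-πi⟨γ,γ⟩} x(γ)`. -/
def GZ0inv {n : ℕ} (x : EN n → ℂ) : EN n → ℂ :=
  fun γ => Complex.exp (-(π : ℂ) * I * (⟪γ, γ⟫ : ℂ)) * x γ

/-!
Both bases consist of normalized orbit sums `Σ_w c(w) δ_{w(α)}` with `c = 1` or `c = det`.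
The Fourier transform sends `δ_γ` to the character `e^{2πi⟨·,γ⟩}`, and `G_𝒵⁻¹` is diagonal
(its symbol `e^{-πi⟨γ,γ⟩}` is `Λ`-periodic on `Λ*` because `Λ` is even), so each matrix
element is a double sum over `W × W` of a kernel `K(v, w)` invariant under the diagonal action
of `W`. Substituting `v = w u` factors such a sum with coefficients `χ₁(v) χ₂(w)` as
`(Σ_w χ₁(w) χ₂(w)) · Σ_u χ₁(u) K(u, 1)`. For `χ₁ = χ₂` the first factor is `|W|`, which cancels
the normalization; for `χ₁ = det`, `χ₂ = 1` it is `Σ_w det w`, which vanishes as soon as some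
`det w = -1`.
-/

section ClosedFinset

variable {G : Type*} [Group G] {W : Finset G}

theorem Finset.sum_comp_mul_left_of_closed {M : Type*} [AddCommMonoid M]
    (hmul : ∀ u ∈ W, ∀ v ∈ W, u * v ∈ W) (hinv : ∀ u ∈ W, u⁻¹ ∈ W) {g : G} (hg : g ∈ W)
    (f : G → M) : ∑ u ∈ W, f (g * u) = ∑ u ∈ W, f u :=
  Finset.sum_nbij' (g * ·) (g⁻¹ * ·) (fun _ hu => hmul _ hg _ hu)
    (fun _ hu => hmul _ (hinv _ hg) _ hu) (by simp) (by simp) (fun _ _ => rfl)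

theorem Finset.sum_monoidHom_eq_zero_of_apply_eq_neg_one
    (hmul : ∀ u ∈ W, ∀ v ∈ W, u * v ∈ W) (hinv : ∀ u ∈ W, u⁻¹ ∈ W)
    (χ : G →* ℝ) {g : G} (hg : g ∈ W) (hχg : χ g = -1) : ∑ w ∈ W, χ w = 0 := by
  refine self_eq_neg.1 ?_
  calc ∑ w ∈ W, χ w = ∑ w ∈ W, χ (g * w) := (sum_comp_mul_left_of_closed hmul hinv hg χ).symm
    _ = -∑ w ∈ W, χ w := by simp [hχg]

theorem Finset.sum_sum_monoidHom_mul_kernel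
    (hmul : ∀ u ∈ W, ∀ v ∈ W, u * v ∈ W) (hinv : ∀ u ∈ W, u⁻¹ ∈ W)
    (χ₁ χ₂ : G →* ℝ) (K : G → G → ℂ) (hK : ∀ g ∈ W, ∀ u v, K (g * u) (g * v) = K u v) :
    ∑ v ∈ W, ∑ w ∈ W, (χ₁ v : ℂ) * χ₂ w * K v w =
      ((∑ w ∈ W, χ₁ w * χ₂ w : ℝ) : ℂ) * ∑ u ∈ W, (χ₁ u : ℂ) * K u 1 := by
  rw [Finset.sum_comm, Complex.ofReal_sum, Finset.sum_mul]
  refine Finset.sum_congr rfl fun w hw => ?_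
  rw [← sum_comp_mul_left_of_closed hmul hinv hw, Finset.mul_sum]
  refine Finset.sum_congr rfl fun u _ => ?_
  rw [← hK w hw u 1, mul_one, map_mul]
  push_cast
  ring

end ClosedFinset

section Determinant

variable {E : Type*} [NormedAddCommGroup E] [InnerProductSpace ℝ E]

def LinearIsometryEquiv.detHom : (E ≃ₗᵢ[ℝ] E) →* ℝ where
  toFun w := LinearMap.det w.toLinearEquiv.toLinearMap
  map_one' := LinearMap.det_id
  map_mul' u v := LinearMap.det_comp u.toLinearEquiv.toLinearMap v.toLinearEquiv.toLinearMap

theorem LinearIsometryEquiv.detHom_mul_self [FiniteDimensional ℝ E] (w : E ≃ₗᵢ[ℝ] E) :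
    detHom w * detHom w = 1 := by
  have h : ‖detHom w‖ = 1 := by
    rw [← w.toLinearIsometry.normDet_eq_one, LinearMap.normDet_eq_norm_det]; rfl
  rw [← abs_mul_abs_self, ← Real.norm_eq_abs, h, one_mul]

end Determinant

theorem cexp_two_pi_I_mul_eq_of_sub_eq_intCast {a b : ℝ} {m : ℤ} (h : a - b = m) :
    cexp (2 * π * I * a) = cexp (2 * π * I * b) :=
  Complex.exp_eq_exp_iff_exists_int.2 ⟨m, by
    rw [show a = b + m by linarith]; push_cast; ring⟩

section Lattice

variable {n : ℕ}

def IsDualLattice (Λ Λd : AddSubgroup (EN n)) : Prop :=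
  ∀ γ, γ ∈ Λd ↔ ∀ l ∈ Λ, ∃ m : ℤ, ⟪l, γ⟫ = (m : ℝ)

def IsEvenLattice (Λ : AddSubgroup (EN n)) : Prop :=
  ∀ l ∈ Λ, ∃ m : ℤ, ⟪l, l⟫ = 2 * (m : ℝ)

def IsCosetTransversal (Λ Λd : AddSubgroup (EN n)) (R : Finset (EN n)) : Prop :=
  ∀ γ ∈ Λd, ∃! r, r ∈ R ∧ γ - r ∈ Λ

variable {Λ Λd : AddSubgroup (EN n)}

theorem map_mem_of_isDualLattice (hΛd : IsDualLattice Λ Λd)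
    {u : EN n ≃ₗᵢ[ℝ] EN n} (hu : ∀ x, x ∈ Λ ↔ u x ∈ Λ) {x : EN n} (hx : x ∈ Λd) :
    u x ∈ Λd := by
  refine (hΛd _).2 fun l hl => ?_
  obtain ⟨m, hm⟩ := (hΛd x).1 hx (u.symm l) ((hu _).2 (by simpa using hl))
  exact ⟨m, by rw [← hm, ← u.inner_map_map (u.symm l), u.apply_symm_apply]⟩

theorem cexp_two_pi_I_inner_eq_of_sub_mem (hΛd : IsDualLattice Λ Λd)
    {γ x y : EN n} (hγ : γ ∈ Λd) (h : x - y ∈ Λ) :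
    cexp (2 * π * I * ⟪x, γ⟫) = cexp (2 * π * I * ⟪y, γ⟫) := by
  obtain ⟨m, hm⟩ := (hΛd γ).1 hγ _ h
  exact cexp_two_pi_I_mul_eq_of_sub_eq_intCast (by rw [← hm, inner_sub_left])

theorem cexp_neg_pi_I_inner_self_eq_of_sub_mem (hΛd : IsDualLattice Λ Λd)
    (heven : IsEvenLattice Λ) {x y : EN n} (hy : y ∈ Λd) (h : x - y ∈ Λ) :
    cexp (-π * I * ⟪x, x⟫) = cexp (-π * I * ⟪y, y⟫) := by
  obtain ⟨m, hm⟩ := (hΛd y).1 hy _ h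
  obtain ⟨k, hk⟩ := heven _ h
  have hx : ⟪x, x⟫ = ⟪y, y⟫ + 2 * (m + k) := by
    rw [← sub_add_cancel x y, real_inner_add_add_self, hm, hk]
    ring
  refine Complex.exp_eq_exp_iff_exists_int.2 ⟨-(m + k), ?_⟩
  rw [hx]
  push_cast
  ring

theorem deltaFn_eq_of_sub_mem {γ x y : EN n} (h : x - y ∈ Λ) :
    deltaFn Λ γ x = deltaFn Λ γ y := by
  have hxy : x - γ = (y - γ) + (x - y) := by abel
  simp only [deltaFn, hxy, Λ.add_mem_cancel_right h]

theorem conj_deltaFn (γ x : EN n) : starRingEnd ℂ (deltaFn Λ γ x) = deltaFn Λ γ x := by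
  unfold deltaFn
  split_ifs <;> simp

theorem deltaFn_map {u : EN n ≃ₗᵢ[ℝ] EN n} (hu : ∀ x, x ∈ Λ ↔ u x ∈ Λ) (γ x : EN n) :
    deltaFn Λ (u γ) (u x) = deltaFn Λ γ x := by
  simp only [deltaFn, ← map_sub, ← hu]

theorem GZ0inv_deltaFn_map {u : EN n ≃ₗᵢ[ℝ] EN n} (hu : ∀ x, x ∈ Λ ↔ u x ∈ Λ) (γ x : EN n) :
    GZ0inv (deltaFn Λ (u γ)) (u x) = GZ0inv (deltaFn Λ γ) x := by
  simp only [GZ0inv, u.inner_map_map, deltaFn_map hu]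

theorem sum_deltaFn_mul {R : Finset (EN n)} (hRrep : IsCosetTransversal Λ Λd R)
    {γ : EN n} (hγ : γ ∈ Λd) {f : EN n → ℂ} (hf : ∀ r, r - γ ∈ Λ → f r = f γ) :
    ∑ r ∈ R, deltaFn Λ γ r * f r = f γ := by
  obtain ⟨r₀, ⟨hr₀R, hr₀⟩, huniq⟩ := hRrep γ hγ
  rw [← Λ.neg_mem_iff, neg_sub] at hr₀
  rw [Finset.sum_eq_single_of_mem r₀ hr₀R, deltaFn, if_pos hr₀, one_mul, hf r₀ hr₀]
  intro r hr hne
  rw [deltaFn, if_neg fun h => hne (huniq r ⟨hr, by rwa [← Λ.neg_mem_iff, neg_sub]⟩), zero_mul]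

theorem DFT0_smul (R : Finset (EN n)) (a : ℂ) (x : EN n → ℂ) :
    DFT0 R (a • x) = a • DFT0 R x := by
  ext γ
  simp only [DFT0, Pi.smul_apply, smul_eq_mul, Finset.mul_sum]
  exact Finset.sum_congr rfl fun _ _ => by ring

theorem GZ0inv_smul (a : ℂ) (x : EN n → ℂ) : GZ0inv (a • x) = a • GZ0inv x := by
  ext γ
  simp only [GZ0inv, Pi.smul_apply, smul_eq_mul]
  ring

theorem innZ_smul_left (R : Finset (EN n)) (a : ℂ) (x y : EN n → ℂ) :
    innZ R (a • x) y = a * innZ R x y := by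
  simp only [innZ, Pi.smul_apply, smul_eq_mul, Finset.mul_sum, mul_assoc]

theorem innZ_smul_right (R : Finset (EN n)) (a : ℂ) (x y : EN n → ℂ) :
    innZ R x (a • y) = starRingEnd ℂ a * innZ R x y := by
  simp only [innZ, Pi.smul_apply, smul_eq_mul, map_mul, Finset.mul_sum]
  exact Finset.sum_congr rfl fun _ _ => by ring

theorem DFT0_eq_of_sub_mem (hΛd : IsDualLattice Λ Λd) {R : Finset (EN n)}
    (hR : ∀ r ∈ R, r ∈ Λd) (f : EN n → ℂ) {x y : EN n} (h : x - y ∈ Λ) :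
    DFT0 R f x = DFT0 R f y := by
  unfold DFT0
  congr 1
  exact Finset.sum_congr rfl fun r hr => by
    rw [cexp_two_pi_I_inner_eq_of_sub_mem hΛd (hR r hr) h]

def orbitDelta (Λ : AddSubgroup (EN n)) (W : Finset (EN n ≃ₗᵢ[ℝ] EN n))
    (c : (EN n ≃ₗᵢ[ℝ] EN n) → ℝ) (α : EN n) : EN n → ℂ :=
  fun γ₀ => ∑ w ∈ W, (c w : ℂ) * deltaFn Λ (w α) γ₀

theorem eInv_eq_smul_orbitDelta (W : Finset (EN n ≃ₗᵢ[ℝ] EN n)) (α : EN n) :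
    eInv Λ W α =
      (((Real.sqrt W.card)⁻¹ : ℝ) : ℂ) • orbitDelta Λ W (1 : (EN n ≃ₗᵢ[ℝ] EN n) →* ℝ) α := by
  ext γ₀
  simp [eInv, orbitDelta]

theorem eAnti_eq_smul_orbitDelta (W : Finset (EN n ≃ₗᵢ[ℝ] EN n)) (α : EN n) :
    eAnti Λ W α =
      (((Real.sqrt W.card)⁻¹ : ℝ) : ℂ) • orbitDelta Λ W LinearIsometryEquiv.detHom α :=
  rfl

theorem orbitDelta_eq_of_sub_mem (W : Finset (EN n ≃ₗᵢ[ℝ] EN n))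
    (c : (EN n ≃ₗᵢ[ℝ] EN n) → ℝ) (α : EN n) {x y : EN n} (h : x - y ∈ Λ) :
    orbitDelta Λ W c α x = orbitDelta Λ W c α y := by
  simp only [orbitDelta, deltaFn_eq_of_sub_mem h]

theorem innZ_orbitDelta {R : Finset (EN n)} (hRrep : IsCosetTransversal Λ Λd R)
    {W : Finset (EN n ≃ₗᵢ[ℝ] EN n)} {α : EN n} (hαW : ∀ v ∈ W, v α ∈ Λd)
    (c : (EN n ≃ₗᵢ[ℝ] EN n) → ℝ) {x : EN n → ℂ}
    (hx : ∀ v ∈ W, ∀ r, r - v α ∈ Λ → x r = x (v α)) :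
    innZ R x (orbitDelta Λ W c α) = ∑ v ∈ W, (c v : ℂ) * x (v α) := by
  simp only [innZ, orbitDelta, map_sum, map_mul, Complex.conj_ofReal, conj_deltaFn,
    Finset.mul_sum]
  rw [Finset.sum_comm]
  refine Finset.sum_congr rfl fun v hv => ?_
  rw [← sum_deltaFn_mul hRrep (hαW v hv) (hx v hv), Finset.mul_sum]
  exact Finset.sum_congr rfl fun _ _ => by ring

theorem DFT0_orbitDelta (hΛd : IsDualLattice Λ Λd) {R : Finset (EN n)}
    (hRrep : IsCosetTransversal Λ Λd R) {W : Finset (EN n ≃ₗᵢ[ℝ] EN n)} {β : EN n}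
    (hβW : ∀ w ∈ W, w β ∈ Λd) (c : (EN n ≃ₗᵢ[ℝ] EN n) → ℝ) {ξ : EN n} (hξ : ξ ∈ Λd) :
    DFT0 R (orbitDelta Λ W c β) ξ =
      (Real.sqrt R.card)⁻¹ * ∑ w ∈ W, (c w : ℂ) * cexp (2 * π * I * ⟪ξ, w β⟫) := by
  simp only [DFT0, orbitDelta, Finset.sum_mul]
  rw [Finset.sum_comm]
  congr 1
  refine Finset.sum_congr rfl fun w hw => ?_
  rw [← sum_deltaFn_mul hRrep (hβW w hw) (f := fun r => cexp (2 * π * I * ⟪ξ, r⟫)),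
    Finset.mul_sum]
  · exact Finset.sum_congr rfl fun _ _ => by ring
  · intro r hr
    rw [real_inner_comm r ξ, real_inner_comm (w β) ξ]
    exact cexp_two_pi_I_inner_eq_of_sub_mem hΛd hξ hr

theorem innZ_DFT0_orbitDelta (hΛd : IsDualLattice Λ Λd) {R : Finset (EN n)}
    (hR : ∀ r ∈ R, r ∈ Λd) (hRrep : IsCosetTransversal Λ Λd R)
    {W : Finset (EN n ≃ₗᵢ[ℝ] EN n)} {α β : EN n} (hαW : ∀ v ∈ W, v α ∈ Λd)
    (hβW : ∀ w ∈ W, w β ∈ Λd) (c₁ c₂ : (EN n ≃ₗᵢ[ℝ] EN n) → ℝ) :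
    innZ R (DFT0 R (orbitDelta Λ W c₂ β)) (orbitDelta Λ W c₁ α) =
      (Real.sqrt R.card)⁻¹ *
        ∑ v ∈ W, ∑ w ∈ W, (c₁ v : ℂ) * c₂ w * cexp (2 * π * I * ⟪v α, w β⟫) := by
  rw [innZ_orbitDelta hRrep hαW c₁ fun _ _ _ hr => DFT0_eq_of_sub_mem hΛd hR _ hr,
    Finset.mul_sum]
  refine Finset.sum_congr rfl fun v hv => ?_
  rw [DFT0_orbitDelta hΛd hRrep hβW c₂ (hαW v hv), Finset.mul_sum, Finset.mul_sum,
    Finset.mul_sum]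
  exact Finset.sum_congr rfl fun _ _ => by ring

theorem innZ_GZ0inv_orbitDelta (hΛd : IsDualLattice Λ Λd) (heven : IsEvenLattice Λ)
    {R : Finset (EN n)} (hRrep : IsCosetTransversal Λ Λd R)
    {W : Finset (EN n ≃ₗᵢ[ℝ] EN n)} {α β : EN n} (hαW : ∀ v ∈ W, v α ∈ Λd)
    (c₁ c₂ : (EN n ≃ₗᵢ[ℝ] EN n) → ℝ) :
    innZ R (GZ0inv (orbitDelta Λ W c₂ β)) (orbitDelta Λ W c₁ α) =
      ∑ v ∈ W, ∑ w ∈ W, (c₁ v : ℂ) * c₂ w * GZ0inv (deltaFn Λ (w β)) (v α) := by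
  rw [innZ_orbitDelta hRrep hαW c₁ fun v hv r hr => ?_]
  · refine Finset.sum_congr rfl fun v _ => ?_
    simp only [GZ0inv, orbitDelta, Finset.mul_sum]
    exact Finset.sum_congr rfl fun _ _ => by ring
  · simp only [GZ0inv, cexp_neg_pi_I_inner_self_eq_of_sub_mem hΛd heven (hαW v hv) hr,
      orbitDelta_eq_of_sub_mem W c₂ β hr]

theorem innZ_DFT0_smul_orbitDelta (hΛd : IsDualLattice Λ Λd) {R : Finset (EN n)}
    (hR : ∀ r ∈ R, r ∈ Λd) (hRrep : IsCosetTransversal Λ Λd R)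
    {W : Finset (EN n ≃ₗᵢ[ℝ] EN n)} (hWmul : ∀ u ∈ W, ∀ v ∈ W, u * v ∈ W)
    (hWinv : ∀ u ∈ W, u⁻¹ ∈ W) {α β : EN n} (hαW : ∀ v ∈ W, v α ∈ Λd)
    (hβW : ∀ w ∈ W, w β ∈ Λd) (χ₁ χ₂ : (EN n ≃ₗᵢ[ℝ] EN n) →* ℝ) (t : ℝ) :
    innZ R (DFT0 R ((t : ℂ) • orbitDelta Λ W χ₂ β)) ((t : ℂ) • orbitDelta Λ W χ₁ α) =
      ((t * t * ∑ w ∈ W, χ₁ w * χ₂ w : ℝ) : ℂ) *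
        ((Real.sqrt R.card)⁻¹ * ∑ u ∈ W, (χ₁ u : ℂ) * cexp (2 * π * I * ⟪u α, β⟫)) := by
  have hK : ∀ g ∈ W, ∀ u v : EN n ≃ₗᵢ[ℝ] EN n,
      cexp (2 * π * I * ⟪(g * u) α, (g * v) β⟫) = cexp (2 * π * I * ⟪u α, v β⟫) :=
    fun g _ u v => by
      simp only [LinearIsometryEquiv.coe_mul, Function.comp_apply, g.inner_map_map]
  rw [DFT0_smul, innZ_smul_left, innZ_smul_right, Complex.conj_ofReal,
    innZ_DFT0_orbitDelta hΛd hR hRrep hαW hβW,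
    Finset.sum_sum_monoidHom_mul_kernel hWmul hWinv _ _ _ hK]
  simp only [LinearIsometryEquiv.coe_one, id, Complex.ofReal_mul]
  ring

theorem innZ_GZ0inv_smul_orbitDelta (hΛd : IsDualLattice Λ Λd) (heven : IsEvenLattice Λ)
    {R : Finset (EN n)} (hRrep : IsCosetTransversal Λ Λd R)
    {W : Finset (EN n ≃ₗᵢ[ℝ] EN n)} (hWmul : ∀ u ∈ W, ∀ v ∈ W, u * v ∈ W)
    (hWinv : ∀ u ∈ W, u⁻¹ ∈ W) (hWΛ : ∀ u ∈ W, ∀ x : EN n, x ∈ Λ ↔ u x ∈ Λ)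
    {α β : EN n} (hαW : ∀ v ∈ W, v α ∈ Λd) (χ₁ χ₂ : (EN n ≃ₗᵢ[ℝ] EN n) →* ℝ) (t : ℝ) :
    innZ R (GZ0inv ((t : ℂ) • orbitDelta Λ W χ₂ β)) ((t : ℂ) • orbitDelta Λ W χ₁ α) =
      ((t * t * ∑ w ∈ W, χ₁ w * χ₂ w : ℝ) : ℂ) *
        ∑ u ∈ W, (χ₁ u : ℂ) * GZ0inv (deltaFn Λ β) (u α) := by
  rw [GZ0inv_smul, innZ_smul_left, innZ_smul_right, Complex.conj_ofReal,
    innZ_GZ0inv_orbitDelta hΛd heven hRrep hαW,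
    Finset.sum_sum_monoidHom_mul_kernel hWmul hWinv _ _ _
      fun g hg _ _ => GZ0inv_deltaFn_map (hWΛ g hg) _ _]
  simp only [LinearIsometryEquiv.coe_one, id, Complex.ofReal_mul]
  ring

end Lattice

theorem matrix_elements_weyl_bases_general
    (n : ℕ) (Λ Λd : AddSubgroup (EN n))
    (hΛd : ∀ γ, γ ∈ Λd ↔ ∀ l ∈ Λ, ∃ m : ℤ, ⟪l, γ⟫ = (m : ℝ))
    (R : Finset (EN n)) (hR : ∀ r ∈ R, r ∈ Λd)
    (hRrep : ∀ γ ∈ Λd, ∃! r, r ∈ R ∧ γ - r ∈ Λ)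
    (W : Finset (EN n ≃ₗᵢ[ℝ] EN n))
    (hW1 : (1 : EN n ≃ₗᵢ[ℝ] EN n) ∈ W)
    (hWmul : ∀ u ∈ W, ∀ v ∈ W, u * v ∈ W)
    (hWinv : ∀ u ∈ W, u⁻¹ ∈ W)
    (hWΛ : ∀ u ∈ W, ∀ x : EN n, x ∈ Λ ↔ u x ∈ Λ)
    (α β : EN n) (hα : α ∈ Λd) (hβ : β ∈ Λd) :
    innZ R (DFT0 R (eInv Λ W β)) (eInv Λ W α) =
        (Real.sqrt R.card)⁻¹ *
          ∑ w ∈ W, Complex.exp (2 * (π : ℂ) * I * (⟪w α, β⟫ : ℂ)) ∧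
    innZ R (DFT0 R (eAnti Λ W β)) (eAnti Λ W α) =
        (Real.sqrt R.card)⁻¹ *
          ∑ w ∈ W, ((LinearMap.det w.toLinearEquiv.toLinearMap : ℝ) : ℂ) *
            Complex.exp (2 * (π : ℂ) * I * (⟪w α, β⟫ : ℂ)) ∧
    ((∃ w ∈ W, LinearMap.det w.toLinearEquiv.toLinearMap = -1) →
      innZ R (DFT0 R (eInv Λ W β)) (eAnti Λ W α) = 0 ∧
      ((∀ l ∈ Λ, ∃ m : ℤ, ⟪l, l⟫ = 2 * (m : ℝ)) →
        innZ R (GZ0inv (eInv Λ W β)) (eAnti Λ W α) = 0)) := by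
  have hαW : ∀ v ∈ W, v α ∈ Λd := fun v hv => map_mem_of_isDualLattice hΛd (hWΛ v hv) hα
  have hβW : ∀ w ∈ W, w β ∈ Λd := fun w hw => map_mem_of_isDualLattice hΛd (hWΛ w hw) hβ
  have hnorm : (Real.sqrt W.card)⁻¹ * (Real.sqrt W.card)⁻¹ * (W.card : ℝ) = 1 := by
    have hW : (0 : ℝ) < W.card := by exact_mod_cast Finset.card_pos.2 ⟨1, hW1⟩
    rw [← mul_inv, Real.mul_self_sqrt hW.le, inv_mul_cancel₀ hW.ne']
  refine ⟨?_, ?_, fun ⟨g, hg, hdet⟩ => ?_⟩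
  · rw [eInv_eq_smul_orbitDelta, eInv_eq_smul_orbitDelta,
      innZ_DFT0_smul_orbitDelta hΛd hR hRrep hWmul hWinv hαW hβW]
    simp [hnorm]
  · rw [eAnti_eq_smul_orbitDelta, eAnti_eq_smul_orbitDelta,
      innZ_DFT0_smul_orbitDelta hΛd hR hRrep hWmul hWinv hαW hβW]
    simp only [LinearIsometryEquiv.detHom_mul_self, Finset.sum_const, nsmul_eq_mul, mul_one,
      hnorm, Complex.ofReal_one, one_mul]
    rfl
  have hsum : ∑ w ∈ W, LinearIsometryEquiv.detHom w * (1 : (EN n ≃ₗᵢ[ℝ] EN n) →* ℝ) w = 0 := by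
    simpa using Finset.sum_monoidHom_eq_zero_of_apply_eq_neg_one hWmul hWinv _ hg hdet
  refine ⟨?_, fun heven => ?_⟩
  · rw [eInv_eq_smul_orbitDelta, eAnti_eq_smul_orbitDelta,
      innZ_DFT0_smul_orbitDelta hΛd hR hRrep hWmul hWinv hαW hβW, hsum]
    simp
  · rw [eInv_eq_smul_orbitDelta, eAnti_eq_smul_orbitDelta,
      innZ_GZ0inv_smul_orbitDelta hΛd heven hRrep hWmul hWinv hWΛ hαW, hsum]
    simp

/-- matrix elements of the discrete Fourier transform in the
Weyl-symmetrized bases: for `α, β ∈ Λ*`,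
(i) `⟨F_𝒵 e_β, e_α⟩_𝒵 = |𝒵|^{-1/2} Σ_{w∈W} e^{2πi⟨w(α),β⟩}`;
(ii) `⟨F_𝒵 ẽ_β, ẽ_α⟩_𝒵 = |𝒵|^{-1/2} Σ_{w∈W} det(w) e^{2πi⟨w(α),β⟩}`;
(iii) provided `W` contains an element of determinant `−1`, `⟨F_𝒵 e_β, ẽ_α⟩_𝒵 = 0`
and, when `Λ` is in addition even, `⟨G_𝒵⁻¹ e_β, ẽ_α⟩_𝒵 = 0`. -/
theorem matrix_elements_weyl_bases
    (n : ℕ) (Λ Λd : AddSubgroup (EN n))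
    (bE : Module.Basis (Fin n) ℝ (EN n))
    (hΛ : ∀ x, x ∈ Λ ↔ ∃ c : Fin n → ℤ, x = ∑ i, (c i : ℝ) • bE i)
    (hint : ∀ x ∈ Λ, ∀ y ∈ Λ, ∃ m : ℤ, ⟪x, y⟫ = (m : ℝ))
    (hΛd : ∀ γ, γ ∈ Λd ↔ ∀ l ∈ Λ, ∃ m : ℤ, ⟪l, γ⟫ = (m : ℝ))
    (R : Finset (EN n)) (hR : ∀ r ∈ R, r ∈ Λd)
    (hRrep : ∀ γ ∈ Λd, ∃! r, r ∈ R ∧ γ - r ∈ Λ)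
    (W : Finset (EN n ≃ₗᵢ[ℝ] EN n))
    (hW1 : (1 : EN n ≃ₗᵢ[ℝ] EN n) ∈ W)
    (hWmul : ∀ u ∈ W, ∀ v ∈ W, u * v ∈ W)
    (hWinv : ∀ u ∈ W, u⁻¹ ∈ W)
    (hWΛ : ∀ u ∈ W, ∀ x : EN n, x ∈ Λ ↔ u x ∈ Λ)
    (α β : EN n) (hα : α ∈ Λd) (hβ : β ∈ Λd) :
    innZ R (DFT0 R (eInv Λ W β)) (eInv Λ W α) =
        (Real.sqrt R.card)⁻¹ *
          ∑ w ∈ W, Complex.exp (2 * (π : ℂ) * I * (⟪w α, β⟫ : ℂ)) ∧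
    innZ R (DFT0 R (eAnti Λ W β)) (eAnti Λ W α) =
        (Real.sqrt R.card)⁻¹ *
          ∑ w ∈ W, ((LinearMap.det w.toLinearEquiv.toLinearMap : ℝ) : ℂ) *
            Complex.exp (2 * (π : ℂ) * I * (⟪w α, β⟫ : ℂ)) ∧
    ((∃ w ∈ W, LinearMap.det w.toLinearEquiv.toLinearMap = -1) →
      innZ R (DFT0 R (eInv Λ W β)) (eAnti Λ W α) = 0 ∧
      ((∀ l ∈ Λ, ∃ m : ℤ, ⟪l, l⟫ = 2 * (m : ℝ)) →
        innZ R (GZ0inv (eInv Λ W β)) (eAnti Λ W α) = 0)) :=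
  matrix_elements_weyl_bases_general n Λ Λd hΛd R hR hRrep W hW1 hWmul hWinv hWΛ α β hα hβ

end
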